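/- Suppose η = +1 (call case) and the European values are strictly positive: e_k(x) > 0 for every k < n and x ∈ C. Define f* : {0,…,n−1} × Ξ(C) → [0,∞] by f*(k,ξ) := inf{ α(x) : x ∈ S_k and Ξ(x) = ξ }, with the convention inf ∅ := ∞. Then the map x ↦ (α(x), Ξ(x)) is a homeomorphism from C onto (0,∞) × Ξ(C), and for every k < n the stopping region satisfies S_k = { x ∈ C : f*(k, Ξ(x)) ≤ α(x) }, the inequality being taken in [0,∞]. -/

import Mathlib

/-!
Dilation `x ↦ γ ∘ x` (`dilate γ x` below) multiplies `α` by `γ`, fixes `Ξ` and commutes with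
the kernels, so `x ↦ (α x, Ξ x)` is a homeomorphism with inverse `(γ, ξ) ↦ γ ∘ ξ`. Backward
induction gives `v_k(γ ∘ x) ≤ γ v_k(x) + (γ - 1) K e^{-r t_k}` for `γ ≥ 1`, and the right-hand
side is the payoff at `γ ∘ x` as soon as `x` is in the money, which holds on `S_k` because
`φ_k = v_k ≥ e_k > 0` there. Hence each stopping region is stable under dilation by `γ ≥ 1`;
being relatively closed, it meets every ray in a closed half-line `{α ≥ f*}`.
-/

open MeasureTheory ProbabilityTheory
open scoped ENNReal NNReal

abbrev StateSpace (d₁ d₂ d₃ : ℕ) : Type :=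
  (Fin d₁ → ℝ) × (Fin d₂ → ℝ) × (Fin d₃ → ℝ)

open Set

section GrowthSpace

variable {X : Type*} [SeminormedAddCommGroup X]

def growthSpace (C : Set X) (a : ℝ) : Set (X → ℝ) :=
  {ψ | ContinuousOn ψ C ∧ ∃ c > 0, ∀ x ∈ C, |ψ x| ≤ c * (1 + ‖x‖ ^ a)}

variable {C : Set X} {a : ℝ}

theorem mem_growthSpace_of_eqOn {ψ₁ ψ₂ : X → ℝ} (h₁ : ψ₁ ∈ growthSpace C a) (h : EqOn ψ₁ ψ₂ C) :
    ψ₂ ∈ growthSpace C a := by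
  obtain ⟨hcont, c, hc, hbound⟩ := h₁
  exact ⟨hcont.congr h.symm, c, hc, fun x hx => h hx ▸ hbound x hx⟩

theorem max_mem_growthSpace {ψ₁ ψ₂ : X → ℝ} (h₁ : ψ₁ ∈ growthSpace C a)
    (h₂ : ψ₂ ∈ growthSpace C a) :
    (fun x => max (ψ₁ x) (ψ₂ x)) ∈ growthSpace C a := by
  obtain ⟨hcont₁, c₁, hc₁, hbound₁⟩ := h₁
  obtain ⟨hcont₂, c₂, hc₂, hbound₂⟩ := h₂
  refine ⟨hcont₁.sup hcont₂, c₁ + c₂, by positivity, fun x hx => ?_⟩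
  calc |max (ψ₁ x) (ψ₂ x)| ≤ max |ψ₁ x| |ψ₂ x| := abs_max_le_max_abs_abs
    _ ≤ |ψ₁ x| + |ψ₂ x| := max_le_add_of_nonneg (abs_nonneg _) (abs_nonneg _)
    _ ≤ c₁ * (1 + ‖x‖ ^ a) + c₂ * (1 + ‖x‖ ^ a) := add_le_add (hbound₁ x hx) (hbound₂ x hx)
    _ = (c₁ + c₂) * (1 + ‖x‖ ^ a) := by ring

end GrowthSpace

section DynamicProgramming

variable {X : Type*} [MeasurableSpace X] {C : Set X} {n : ℕ}
  {κ : ℕ → Kernel X X} {φ v e : ℕ → X → ℝ}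

theorem european_le_value (hκC : ∀ k < n, ∀ x ∈ C, ∀ᵐ y ∂κ k x, y ∈ C)
    (hvint : ∀ k < n, ∀ x ∈ C, Integrable (v (k + 1)) (κ k x))
    (heint : ∀ k < n, ∀ x ∈ C, Integrable (e (k + 1)) (κ k x))
    (hvn : ∀ x ∈ C, v n x = φ n x)
    (hv : ∀ k < n, ∀ x ∈ C, v k x = max (φ k x) (∫ y, v (k + 1) y ∂κ k x))
    (hen : ∀ x ∈ C, e n x = φ n x) (he : ∀ k < n, ∀ x ∈ C, e k x = ∫ y, e (k + 1) y ∂κ k x) :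
    ∀ k ≤ n, ∀ x ∈ C, e k x ≤ v k x := by
  intro k hk
  induction hk using Nat.decreasingInduction with
  | self => exact fun x hx => (hen x hx).trans_le (hvn x hx).ge
  | of_succ k hk ih =>
    intro x hx
    rw [he k hk x hx, hv k hk x hx]
    refine le_max_of_le_right (integral_mono_ae (heint k hk x hx) (hvint k hk x hx) ?_)
    filter_upwards [hκC k hk x hx] with y hy using ih y hy

variable [SeminormedAddCommGroup X] {a : ℝ}

theorem value_mem_growthSpace (hφ : ∀ k ≤ n, φ k ∈ growthSpace C a)
    (hκ : ∀ k < n, ∀ ψ ∈ growthSpace C a, (fun x => ∫ y, ψ y ∂κ k x) ∈ growthSpace C a)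
    (hvn : ∀ x ∈ C, v n x = φ n x)
    (hv : ∀ k < n, ∀ x ∈ C, v k x = max (φ k x) (∫ y, v (k + 1) y ∂κ k x)) :
    ∀ k ≤ n, v k ∈ growthSpace C a := by
  intro k hk
  induction hk using Nat.decreasingInduction with
  | self => exact mem_growthSpace_of_eqOn (hφ n le_rfl) fun x hx => (hvn x hx).symm
  | of_succ k hk ih =>
    exact mem_growthSpace_of_eqOn (max_mem_growthSpace (hφ k hk.le) (hκ k hk _ ih))
      fun x hx => (hv k hk x hx).symm

theorem european_mem_growthSpace (hφ : φ n ∈ growthSpace C a)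
    (hκ : ∀ k < n, ∀ ψ ∈ growthSpace C a, (fun x => ∫ y, ψ y ∂κ k x) ∈ growthSpace C a)
    (hen : ∀ x ∈ C, e n x = φ n x) (he : ∀ k < n, ∀ x ∈ C, e k x = ∫ y, e (k + 1) y ∂κ k x) :
    ∀ k ≤ n, e k ∈ growthSpace C a := by
  intro k hk
  induction hk using Nat.decreasingInduction with
  | self => exact mem_growthSpace_of_eqOn hφ fun x hx => (hen x hx).symm
  | of_succ k hk ih => exact mem_growthSpace_of_eqOn (hκ k hk _ ih) fun x hx => (he k hk x hx).symm

end DynamicProgramming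

theorem integral_map_le_mul_add {X Y : Type*} [MeasurableSpace X] [MeasurableSpace Y]
    {μ : Measure X} [IsProbabilityMeasure μ] {T : X → Y} (hT : AEMeasurable T μ) {ψ : Y → ℝ}
    {f : X → ℝ} (hψ : Integrable ψ (μ.map T)) (hf : Integrable f μ) {γ c : ℝ}
    (hle : ∀ᵐ y ∂μ, ψ (T y) ≤ γ * f y + c) :
    ∫ y, ψ y ∂μ.map T ≤ γ * ∫ y, f y ∂μ + c := by
  have hψT : Integrable (ψ ∘ T) μ := (integrable_map_measure hψ.1 hT).1 hψ
  calc ∫ y, ψ y ∂μ.map T = ∫ y, ψ (T y) ∂μ := integral_map hT hψ.1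
    _ ≤ ∫ y, (γ * f y + c) ∂μ :=
      integral_mono_ae hψT ((hf.const_mul γ).add (integrable_const c)) hle
    _ = γ * ∫ y, f y ∂μ + c := by
      rw [integral_add (hf.const_mul γ) (integrable_const c), integral_const_mul, integral_const]
      simp

theorem max_mul_sub_le {K A γ : ℝ} (hK : 0 ≤ K) (hγ : 1 ≤ γ) :
    max (γ * A - K) 0 ≤ γ * max (A - K) 0 + (γ - 1) * K := by
  have hγK : 0 ≤ (γ - 1) * K := mul_nonneg (by linarith) hK
  refine max_le ?_ (by positivity)
  nlinarith [le_max_left (A - K) 0]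

theorem max_mul_sub_eq {K A γ : ℝ} (hK : 0 ≤ K) (hγ : 1 ≤ γ) (hA : K ≤ A) :
    max (γ * A - K) 0 = γ * max (A - K) 0 + (γ - 1) * K := by
  rw [max_eq_left (by nlinarith), max_eq_left (by linarith)]
  ring

namespace StateSpace

variable {d₁ d₂ d₃ : ℕ}

def dilate (γ : ℝ) (x : StateSpace d₁ d₂ d₃) : StateSpace d₁ d₂ d₃ := (γ • x.1, x.2.1, γ • x.2.2)

@[simp]
theorem dilate_one (x : StateSpace d₁ d₂ d₃) : dilate 1 x = x := by
  simp [dilate]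

theorem dilate_dilate (γ δ : ℝ) (x : StateSpace d₁ d₂ d₃) :
    dilate γ (dilate δ x) = dilate (γ * δ) x := by
  simp [dilate, smul_smul]

@[fun_prop]
theorem continuous_dilate : Continuous fun p : ℝ × StateSpace d₁ d₂ d₃ => dilate p.1 p.2 := by
  unfold dilate; fun_prop

variable {C : Set (StateSpace d₁ d₂ d₃)} {α : StateSpace d₁ d₂ d₃ → ℝ}
  {Ξ : StateSpace d₁ d₂ d₃ → StateSpace d₁ d₂ d₃}

theorem latent_mem (hC : ∀ γ > 0, ∀ x ∈ C, dilate γ x ∈ C) (hαpos : ∀ x ∈ C, 0 < α x)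
    (hΞ : ∀ x ∈ C, Ξ x = dilate (α x)⁻¹ x) {x : StateSpace d₁ d₂ d₃} (hx : x ∈ C) : Ξ x ∈ C :=
  hΞ x hx ▸ hC _ (inv_pos.2 (hαpos x hx)) x hx

theorem dilate_alpha_latent (hαpos : ∀ x ∈ C, 0 < α x) (hΞ : ∀ x ∈ C, Ξ x = dilate (α x)⁻¹ x)
    {x : StateSpace d₁ d₂ d₃} (hx : x ∈ C) : dilate (α x) (Ξ x) = x := by
  rw [hΞ x hx, dilate_dilate, mul_inv_cancel₀ (hαpos x hx).ne', dilate_one]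

theorem latent_dilate (hC : ∀ γ > 0, ∀ x ∈ C, dilate γ x ∈ C)
    (hαhom : ∀ γ > 0, ∀ x ∈ C, α (dilate γ x) = γ * α x) (hΞ : ∀ x ∈ C, Ξ x = dilate (α x)⁻¹ x)
    {γ : ℝ} (hγ : 0 < γ) {x : StateSpace d₁ d₂ d₃} (hx : x ∈ C) : Ξ (dilate γ x) = Ξ x := by
  rw [hΞ _ (hC γ hγ x hx), hαhom γ hγ x hx, hΞ x hx, dilate_dilate, mul_inv_rev,
    inv_mul_cancel_right₀ hγ.ne']

theorem alpha_latent (hαpos : ∀ x ∈ C, 0 < α x)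
    (hαhom : ∀ γ > 0, ∀ x ∈ C, α (dilate γ x) = γ * α x) (hΞ : ∀ x ∈ C, Ξ x = dilate (α x)⁻¹ x)
    {x : StateSpace d₁ d₂ d₃} (hx : x ∈ C) : α (Ξ x) = 1 := by
  rw [hΞ x hx, hαhom _ (inv_pos.2 (hαpos x hx)) x hx, inv_mul_cancel₀ (hαpos x hx).ne']

theorem latent_latent (hC : ∀ γ > 0, ∀ x ∈ C, dilate γ x ∈ C) (hαpos : ∀ x ∈ C, 0 < α x)
    (hαhom : ∀ γ > 0, ∀ x ∈ C, α (dilate γ x) = γ * α x) (hΞ : ∀ x ∈ C, Ξ x = dilate (α x)⁻¹ x)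
    {x : StateSpace d₁ d₂ d₃} (hx : x ∈ C) : Ξ (Ξ x) = Ξ x :=
  (congrArg Ξ (hΞ x hx)).trans (latent_dilate hC hαhom hΞ (inv_pos.2 (hαpos x hx)) hx)

theorem continuousOn_latent (hαc : ContinuousOn α C) (hαpos : ∀ x ∈ C, 0 < α x)
    (hΞ : ∀ x ∈ C, Ξ x = dilate (α x)⁻¹ x) : ContinuousOn Ξ C :=
  (continuous_dilate.comp_continuousOn
    ((hαc.inv₀ fun x hx => (hαpos x hx).ne').prodMk continuousOn_id)).congr hΞ

theorem dilate_mem_of_mem_polar (hC : ∀ γ > 0, ∀ x ∈ C, dilate γ x ∈ C)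
    (hαpos : ∀ x ∈ C, 0 < α x) (hΞ : ∀ x ∈ C, Ξ x = dilate (α x)⁻¹ x)
    {p : ℝ × StateSpace d₁ d₂ d₃} (hp : p ∈ Ioi 0 ×ˢ (Ξ '' C)) : dilate p.1 p.2 ∈ C := by
  obtain ⟨hγ, x, hx, hξ⟩ := hp
  exact hξ ▸ hC _ hγ _ (latent_mem hC hαpos hΞ hx)

def polarHomeomorph (hC : ∀ γ > 0, ∀ x ∈ C, dilate γ x ∈ C) (hαc : ContinuousOn α C)
    (hαpos : ∀ x ∈ C, 0 < α x) (hαhom : ∀ γ > 0, ∀ x ∈ C, α (dilate γ x) = γ * α x)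
    (hΞ : ∀ x ∈ C, Ξ x = dilate (α x)⁻¹ x) : C ≃ₜ ↥(Ioi (0 : ℝ) ×ˢ (Ξ '' C)) where
  toFun x := ⟨(α x, Ξ x), hαpos x x.2, x, x.2, rfl⟩
  invFun p := ⟨dilate p.1.1 p.1.2, dilate_mem_of_mem_polar hC hαpos hΞ p.2⟩
  left_inv x := Subtype.ext (dilate_alpha_latent hαpos hΞ x.2)
  right_inv := by
    rintro ⟨⟨γ, ξ⟩, hγ, hξ⟩
    apply Subtype.ext
    change (α (dilate γ ξ), Ξ (dilate γ ξ)) = (γ, ξ)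
    obtain ⟨x, hx, rfl⟩ := hξ
    have hΞx := latent_mem hC hαpos hΞ hx
    rw [hαhom γ hγ _ hΞx, alpha_latent hαpos hαhom hΞ hx, mul_one,
      latent_dilate hC hαhom hΞ hγ hΞx, latent_latent hC hαpos hαhom hΞ hx]
  continuous_toFun := ((hαc.domRestrict).prodMk
    (continuousOn_latent hαc hαpos hΞ).domRestrict).subtype_mk _
  continuous_invFun := (continuous_dilate.comp continuous_subtype_val).subtype_mk _

theorem eq_of_forall_dilate_eq (hC : ∀ γ > 0, ∀ x ∈ C, dilate γ x ∈ C)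
    {u w : StateSpace d₁ d₂ d₃ → ℝ} (hu : ContinuousOn u C) (hw : ContinuousOn w C)
    {x : StateSpace d₁ d₂ d₃} (hx : x ∈ C)
    (h : ∀ γ > 1, u (dilate γ x) = w (dilate γ x)) : u x = w x := by
  have hmaps : MapsTo (fun γ => dilate γ x) (Ici 1) C :=
    fun γ hγ => hC γ (zero_lt_one.trans_le hγ) x hx
  have hcont : ContinuousOn (fun γ : ℝ => dilate γ x) (Ici 1) := by fun_prop
  have := EqOn.of_subset_closure (fun γ hγ => h γ hγ) (hu.comp hcont hmaps) (hw.comp hcont hmaps)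
    Ioi_subset_Ici_self (closure_Ioi (1 : ℝ)).ge (self_mem_Ici (a := (1 : ℝ)))
  simpa using this

theorem eq_setOf_sInf_le (hαpos : ∀ x ∈ C, 0 < α x) (hΞ : ∀ x ∈ C, Ξ x = dilate (α x)⁻¹ x)
    {S : Set (StateSpace d₁ d₂ d₃)} (hSC : S ⊆ C) (hup : ∀ x ∈ S, ∀ γ ≥ 1, dilate γ x ∈ S)
    (hclosed : ∀ x ∈ C, (∀ γ > 1, dilate γ x ∈ S) → x ∈ S) :
    S = {x | x ∈ C ∧ sInf ((fun y => ENNReal.ofReal (α y)) '' {y | y ∈ S ∧ Ξ y = Ξ x}) ≤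
      ENNReal.ofReal (α x)} := by
  ext x
  refine ⟨fun hx => ⟨hSC hx, sInf_le ⟨x, ⟨hx, rfl⟩, rfl⟩⟩, fun ⟨hx, hle⟩ => hclosed x hx ?_⟩
  intro γ hγ
  have hαx := hαpos x hx
  obtain ⟨_, ⟨y, ⟨hy, hξ⟩, rfl⟩, hαy⟩ := sInf_lt_iff.1 <|
    hle.trans_lt ((ENNReal.ofReal_lt_ofReal_iff (by positivity)).2 (lt_mul_of_one_lt_left hαx hγ))
  have hαy' := hαpos y (hSC hy)
  have hratio : 1 ≤ γ * α x / α y :=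
    (one_le_div hαy').2 ((ENNReal.ofReal_lt_ofReal_iff (by positivity)).1 hαy).le
  -- `x` and `y` lie on the same ray, and `y` is the closer one to the apex
  suffices dilate γ x = dilate (γ * α x / α y) y from this ▸ hup y hy _ hratio
  calc dilate γ x = dilate γ (dilate (α x) (Ξ x)) := by rw [dilate_alpha_latent hαpos hΞ hx]
    _ = dilate (γ * α x / α y) (dilate (α y) (Ξ y)) := by
      rw [hξ, dilate_dilate, dilate_dilate, div_mul_cancel₀ _ hαy'.ne']
    _ = dilate (γ * α x / α y) y := by rw [dilate_alpha_latent hαpos hΞ (hSC hy)]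

variable {A φ : StateSpace d₁ d₂ d₃ → ℝ} {E K : ℝ}

theorem payoff_dilate_le (hC : ∀ γ > 0, ∀ x ∈ C, dilate γ x ∈ C)
    (hAhom : ∀ γ > 0, ∀ x ∈ C, A (dilate γ x) = γ * A x)
    (hφ : ∀ x ∈ C, φ x = E * max (A x - K) 0) (hE : 0 ≤ E) (hK : 0 ≤ K)
    {γ : ℝ} (hγ : 1 ≤ γ) {x : StateSpace d₁ d₂ d₃} (hx : x ∈ C) :
    φ (dilate γ x) ≤ γ * φ x + (γ - 1) * K * E := by
  have hγ0 : 0 < γ := zero_lt_one.trans_le hγ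
  rw [hφ _ (hC γ hγ0 x hx), hφ x hx, hAhom γ hγ0 x hx]
  calc E * max (γ * A x - K) 0 ≤ E * (γ * max (A x - K) 0 + (γ - 1) * K) :=
        mul_le_mul_of_nonneg_left (max_mul_sub_le hK hγ) hE
    _ = γ * (E * max (A x - K) 0) + (γ - 1) * K * E := by ring

theorem payoff_dilate_eq (hC : ∀ γ > 0, ∀ x ∈ C, dilate γ x ∈ C)
    (hAhom : ∀ γ > 0, ∀ x ∈ C, A (dilate γ x) = γ * A x)
    (hφ : ∀ x ∈ C, φ x = E * max (A x - K) 0) (hK : 0 ≤ K)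
    {γ : ℝ} (hγ : 1 ≤ γ) {x : StateSpace d₁ d₂ d₃} (hx : x ∈ C) (hpos : 0 < φ x) :
    φ (dilate γ x) = γ * φ x + (γ - 1) * K * E := by
  have hγ0 : 0 < γ := zero_lt_one.trans_le hγ
  have hAK : K ≤ A x := by
    by_contra! h
    rw [hφ x hx, max_eq_right (by linarith), mul_zero] at hpos
    exact hpos.false
  rw [hφ _ (hC γ hγ0 x hx), hφ x hx, hAhom γ hγ0 x hx, max_mul_sub_eq hK hγ hAK]
  ring

theorem value_eq_payoff_dilate {v : StateSpace d₁ d₂ d₃ → ℝ}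
    (hC : ∀ γ > 0, ∀ x ∈ C, dilate γ x ∈ C)
    (hAhom : ∀ γ > 0, ∀ x ∈ C, A (dilate γ x) = γ * A x)
    (hφ : ∀ x ∈ C, φ x = E * max (A x - K) 0) (hK : 0 ≤ K) (hφv : ∀ x ∈ C, φ x ≤ v x)
    (hvle : ∀ γ ≥ 1, ∀ x ∈ C, v (dilate γ x) ≤ γ * v x + (γ - 1) * K * E)
    {x : StateSpace d₁ d₂ d₃} (hx : x ∈ C) (hvx : v x = φ x) (hpos : 0 < φ x)
    {γ : ℝ} (hγ : 1 ≤ γ) : v (dilate γ x) = φ (dilate γ x) := by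
  refine le_antisymm ?_ (hφv _ (hC γ (zero_lt_one.trans_le hγ) x hx))
  calc v (dilate γ x) ≤ γ * v x + (γ - 1) * K * E := hvle γ hγ x hx
    _ = φ (dilate γ x) := by rw [hvx, payoff_dilate_eq hC hAhom hφ hK hγ hx hpos]

theorem value_dilate_le {n : ℕ} {t : ℕ → ℝ} {r : ℝ} {φ v : ℕ → StateSpace d₁ d₂ d₃ → ℝ}
    {κ : ℕ → Kernel (StateSpace d₁ d₂ d₃) (StateSpace d₁ d₂ d₃)} [∀ k, IsMarkovKernel (κ k)]
    (hK : 0 ≤ K) (hr : 0 ≤ r) (ht : ∀ i < n, t i ≤ t (i + 1))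
    (hC : ∀ γ > 0, ∀ x ∈ C, dilate γ x ∈ C) (hAhom : ∀ γ > 0, ∀ x ∈ C, A (dilate γ x) = γ * A x)
    (hφ : ∀ k ≤ n, ∀ x ∈ C, φ k x = Real.exp (-(r * t k)) * max (A x - K) 0)
    (hκC : ∀ k < n, ∀ x ∈ C, ∀ᵐ y ∂κ k x, y ∈ C)
    (hκdil : ∀ k < n, ∀ γ > 0, ∀ x ∈ C, (κ k x).map (dilate γ) = κ k (dilate γ x))
    (hvint : ∀ k < n, ∀ x ∈ C, Integrable (v (k + 1)) (κ k x))
    (hvn : ∀ x ∈ C, v n x = φ n x)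
    (hv : ∀ k < n, ∀ x ∈ C, v k x = max (φ k x) (∫ y, v (k + 1) y ∂κ k x)) :
    ∀ k ≤ n, ∀ γ ≥ 1, ∀ x ∈ C,
      v k (dilate γ x) ≤ γ * v k x + (γ - 1) * K * Real.exp (-(r * t k)) := by
  intro k hk
  induction hk using Nat.decreasingInduction with
  | self =>
    intro γ hγ x hx
    rw [hvn x hx, hvn _ (hC γ (zero_lt_one.trans_le hγ) x hx)]
    exact payoff_dilate_le hC hAhom (hφ n le_rfl) (Real.exp_pos _).le hK hγ hx
  | of_succ k hk ih =>
    intro γ hγ x hx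
    have hγ0 : 0 < γ := zero_lt_one.trans_le hγ
    have hγK : 0 ≤ (γ - 1) * K := mul_nonneg (by linarith) hK
    have hdisc : Real.exp (-(r * t (k + 1))) ≤ Real.exp (-(r * t k)) :=
      Real.exp_le_exp.2 (neg_le_neg (mul_le_mul_of_nonneg_left (ht k hk) hr))
    have hint : Integrable (v (k + 1)) ((κ k x).map (dilate γ)) :=
      hκdil k hk γ hγ0 x hx ▸ hvint k hk _ (hC γ hγ0 x hx)
    rw [hv k hk _ (hC γ hγ0 x hx), hv k hk x hx, ← hκdil k hk γ hγ0 x hx]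
    refine max_le ?_ ?_
    · calc φ k (dilate γ x) ≤ γ * φ k x + (γ - 1) * K * Real.exp (-(r * t k)) :=
            payoff_dilate_le hC hAhom (hφ k hk.le) (Real.exp_pos _).le hK hγ hx
        _ ≤ _ := by gcongr; exact le_max_left _ _
    · calc ∫ y, v (k + 1) y ∂(κ k x).map (dilate γ)
          ≤ γ * ∫ y, v (k + 1) y ∂κ k x + (γ - 1) * K * Real.exp (-(r * t (k + 1))) := by
            refine integral_map_le_mul_add (by fun_prop : Continuous (dilate γ)).aemeasurable hint
              (hvint k hk x hx) ?_
            filter_upwards [hκC k hk x hx] with y hy using ih γ hγ y hy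
        _ ≤ _ := by gcongr; exact le_max_right _ _

end StateSpace

open StateSpace

theorem stmt_5_general
    {d₁ d₂ d₃ : ℕ}
    (C : Set (StateSpace d₁ d₂ d₃))
    (scale : ℝ → StateSpace d₁ d₂ d₃ → StateSpace d₁ d₂ d₃)
    (hscale : ∀ γ x, scale γ x = (γ • x.1, x.2.1, γ • x.2.2))
    (hC : ∀ γ > (0 : ℝ), ∀ x ∈ C, scale γ x ∈ C)
    (n : ℕ) (t : ℕ → ℝ) (ht : ∀ i < n, t i < t (i + 1))
    (a : ℝ)
    (La : Set (StateSpace d₁ d₂ d₃ → ℝ))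
    (hLa : La = {ψ | ContinuousOn ψ C ∧
      ∃ c > 0, ∀ x ∈ C, |ψ x| ≤ c * (1 + ‖x‖ ^ a)})
    (α β : StateSpace d₁ d₂ d₃ → ℝ)
    (hαc : ContinuousOn α C) (hαpos : ∀ x ∈ C, 0 < α x)
    (hαhom : ∀ γ > (0 : ℝ), ∀ x ∈ C, α (scale γ x) = γ * α x)
    (hβhom : ∀ γ > (0 : ℝ), ∀ x ∈ C, β (scale γ x) = γ * β x)
    (K r η : ℝ) (hK : 0 < K) (hr : 0 ≤ r) (hη : η = 1)
    (φ : ℕ → StateSpace d₁ d₂ d₃ → ℝ)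
    (hφdef : ∀ k ≤ n, ∀ x ∈ C,
      φ k x = Real.exp (-(r * t k)) * max (η * (α x - β x - K)) 0)
    (hφLa : ∀ k ≤ n, φ k ∈ La)
    (κ : ℕ → Kernel (StateSpace d₁ d₂ d₃) (StateSpace d₁ d₂ d₃))
    (hκ : ∀ k, IsMarkovKernel (κ k))
    (hκC : ∀ k < n, ∀ x ∈ C, (κ k) x Cᶜ = 0)
    (hgc : ∀ k < n, ∀ ψ ∈ La,
      (∀ x ∈ C, Integrable ψ ((κ k) x)) ∧
      (fun x => ∫ y, ψ y ∂((κ k) x)) ∈ La)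
    (hκscale : ∀ k < n, ∀ γ > (0 : ℝ), ∀ x ∈ C,
      Measure.map (scale γ) ((κ k) x) = (κ k) (scale γ x))
    (v : ℕ → StateSpace d₁ d₂ d₃ → ℝ)
    (hvn : ∀ x ∈ C, v n x = φ n x)
    (hv : ∀ k < n, ∀ x ∈ C, v k x = max (φ k x) (∫ y, v (k + 1) y ∂((κ k) x)))
    (e : ℕ → StateSpace d₁ d₂ d₃ → ℝ)
    (hen : ∀ x ∈ C, e n x = φ n x)
    (he : ∀ k < n, ∀ x ∈ C, e k x = ∫ y, e (k + 1) y ∂((κ k) x))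
    (hepos : ∀ k < n, ∀ x ∈ C, 0 < e k x)
    (S : ℕ → Set (StateSpace d₁ d₂ d₃))
    (hS : ∀ k, S k = {x | x ∈ C ∧ v k x = φ k x})
    (Ξ : StateSpace d₁ d₂ d₃ → StateSpace d₁ d₂ d₃)
    (hΞ : ∀ x ∈ C, Ξ x = scale (α x)⁻¹ x)
    (fstar : ℕ → StateSpace d₁ d₂ d₃ → ℝ≥0∞)
    (hfstar : ∀ k < n, ∀ ξ, fstar k ξ =
      sInf ((fun x => ENNReal.ofReal (α x)) '' {x | x ∈ S k ∧ Ξ x = ξ})) :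
    (∃ H : ↥C ≃ₜ ↥(Set.Ioi (0 : ℝ) ×ˢ (Ξ '' C)),
      ∀ x : ↥C, (H x : ℝ × StateSpace d₁ d₂ d₃) = (α ↑x, Ξ ↑x)) ∧
    (∀ k < n, S k = {x | x ∈ C ∧ fstar k (Ξ x) ≤ ENNReal.ofReal (α x)}) := by
  obtain rfl : scale = dilate := funext₂ hscale
  subst hLa hη
  have hAhom : ∀ γ > 0, ∀ x ∈ C, α (dilate γ x) - β (dilate γ x) = γ * (α x - β x) :=
    fun γ hγ x hx => by rw [hαhom γ hγ x hx, hβhom γ hγ x hx, mul_sub]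
  have hφ : ∀ k ≤ n, ∀ x ∈ C, φ k x = Real.exp (-(r * t k)) * max (α x - β x - K) 0 :=
    fun k hk x hx => by rw [hφdef k hk x hx, one_mul]
  have hκC' : ∀ k < n, ∀ x ∈ C, ∀ᵐ y ∂κ k x, y ∈ C := fun k hk x hx => ae_iff.2 (hκC k hk x hx)
  have hvLa := value_mem_growthSpace hφLa (fun k hk ψ hψ => (hgc k hk ψ hψ).2) hvn hv
  have heLa := european_mem_growthSpace (hφLa n le_rfl) (fun k hk ψ hψ => (hgc k hk ψ hψ).2) hen he
  have hvint : ∀ k < n, ∀ x ∈ C, Integrable (v (k + 1)) (κ k x) :=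
    fun k hk => (hgc k hk _ (hvLa (k + 1) hk)).1
  have hev := european_le_value hκC' hvint (fun k hk => (hgc k hk _ (heLa (k + 1) hk)).1)
    hvn hv hen he
  have hvdil := value_dilate_le (A := fun x => α x - β x) hK.le hr (fun i hi => (ht i hi).le) hC
    hAhom hφ hκC' hκscale hvint hvn hv
  refine ⟨⟨polarHomeomorph hC hαc hαpos hαhom hΞ, fun _ => rfl⟩, fun k hk => ?_⟩
  simp_rw [hfstar k hk]
  refine eq_setOf_sInf_le hαpos hΞ (fun x hx => (hS k ▸ hx).1) (fun x hxS γ hγ => ?_)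
    (fun x hx hray => ?_)
  · rw [hS k] at hxS ⊢
    obtain ⟨hx, hvx⟩ := hxS
    have hpos : 0 < φ k x := (hepos k hk x hx).trans_le ((hev k hk.le x hx).trans hvx.le)
    refine ⟨hC γ (zero_lt_one.trans_le hγ) x hx, value_eq_payoff_dilate hC hAhom (hφ k hk.le)
      hK.le (fun y hy => (hv k hk y hy).ge.trans' (le_max_left _ _)) (hvdil k hk.le) hx hvx hpos hγ⟩
  · rw [hS k] at hray ⊢
    exact ⟨hx, eq_of_forall_dilate_eq hC (hvLa k hk.le).1 (hφLa k hk.le).1 hx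
      fun γ hγ => (hray γ hγ).2⟩

/-- Call case (`η = +1`): suppose the European values are strictly
positive, `e_k(x) > 0` for every `k < n` and `x ∈ C`.  With the latent coordinate map
`Ξ(x) := (s/α(x), y, z/α(x))` and `f*(k,ξ) := inf{α(x) : x ∈ S_k, Ξ(x) = ξ}` (with
`inf ∅ := ∞`), the map `x ↦ (α(x), Ξ(x))` is a homeomorphism from `C` onto
`(0,∞) × Ξ(C)`, and for every `k < n` the stopping region satisfies
`S_k = { x ∈ C : f*(k, Ξ(x)) ≤ α(x) }`, the inequality being taken in `[0,∞]`. -/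
theorem stmt_5
    {d₁ d₂ d₃ : ℕ}
    (C : Set (StateSpace d₁ d₂ d₃)) (hCmeas : MeasurableSet C)
    (scale : ℝ → StateSpace d₁ d₂ d₃ → StateSpace d₁ d₂ d₃)
    (hscale : ∀ γ x, scale γ x = (γ • x.1, x.2.1, γ • x.2.2))
    (hC : ∀ γ > (0 : ℝ), ∀ x ∈ C, scale γ x ∈ C)
    (n : ℕ) (hn : 1 ≤ n) (t : ℕ → ℝ) (ht : ∀ i < n, t i < t (i + 1))
    (a : ℝ) (ha : 0 < a)
    (La : Set (StateSpace d₁ d₂ d₃ → ℝ))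
    (hLa : La = {ψ | ContinuousOn ψ C ∧
      ∃ c > 0, ∀ x ∈ C, |ψ x| ≤ c * (1 + ‖x‖ ^ a)})
    (α β : StateSpace d₁ d₂ d₃ → ℝ)
    (hαc : ContinuousOn α C) (hαpos : ∀ x ∈ C, 0 < α x)
    (hαhom : ∀ γ > (0 : ℝ), ∀ x ∈ C, α (scale γ x) = γ * α x)
    (hβc : ContinuousOn β C) (hβnn : ∀ x ∈ C, 0 ≤ β x)
    (hβhom : ∀ γ > (0 : ℝ), ∀ x ∈ C, β (scale γ x) = γ * β x)
    (K r η : ℝ) (hK : 0 < K) (hr : 0 ≤ r) (hη : η = 1)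
    (φ : ℕ → StateSpace d₁ d₂ d₃ → ℝ)
    (hφdef : ∀ k ≤ n, ∀ x ∈ C,
      φ k x = Real.exp (-(r * t k)) * max (η * (α x - β x - K)) 0)
    (hφLa : ∀ k ≤ n, φ k ∈ La)
    (κ : ℕ → Kernel (StateSpace d₁ d₂ d₃) (StateSpace d₁ d₂ d₃))
    (hκ : ∀ k, IsMarkovKernel (κ k))
    (hκC : ∀ k < n, ∀ x ∈ C, (κ k) x Cᶜ = 0)
    (hgc : ∀ k < n, ∀ ψ ∈ La,
      (∀ x ∈ C, Integrable ψ ((κ k) x)) ∧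
      (fun x => ∫ y, ψ y ∂((κ k) x)) ∈ La)
    (hκscale : ∀ k < n, ∀ γ > (0 : ℝ), ∀ x ∈ C,
      Measure.map (scale γ) ((κ k) x) = (κ k) (scale γ x))
    (v : ℕ → StateSpace d₁ d₂ d₃ → ℝ)
    (hvn : ∀ x ∈ C, v n x = φ n x)
    (hv : ∀ k < n, ∀ x ∈ C, v k x = max (φ k x) (∫ y, v (k + 1) y ∂((κ k) x)))
    (e : ℕ → StateSpace d₁ d₂ d₃ → ℝ)
    (hen : ∀ x ∈ C, e n x = φ n x)
    (he : ∀ k < n, ∀ x ∈ C, e k x = ∫ y, e (k + 1) y ∂((κ k) x))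
    (hepos : ∀ k < n, ∀ x ∈ C, 0 < e k x)
    (S : ℕ → Set (StateSpace d₁ d₂ d₃))
    (hS : ∀ k, S k = {x | x ∈ C ∧ v k x = φ k x})
    (Ξ : StateSpace d₁ d₂ d₃ → StateSpace d₁ d₂ d₃)
    (hΞ : ∀ x ∈ C, Ξ x = scale (α x)⁻¹ x)
    (fstar : ℕ → StateSpace d₁ d₂ d₃ → ℝ≥0∞)
    (hfstar : ∀ k < n, ∀ ξ, fstar k ξ =
      sInf ((fun x => ENNReal.ofReal (α x)) '' {x | x ∈ S k ∧ Ξ x = ξ})) :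
    (∃ H : ↥C ≃ₜ ↥(Set.Ioi (0 : ℝ) ×ˢ (Ξ '' C)),
      ∀ x : ↥C, (H x : ℝ × StateSpace d₁ d₂ d₃) = (α ↑x, Ξ ↑x)) ∧
    (∀ k < n, S k = {x | x ∈ C ∧ fstar k (Ξ x) ≤ ENNReal.ofReal (α x)}) :=
  stmt_5_general C scale hscale hC n t ht a La hLa α β hαc hαpos hαhom hβhom K r η hK hr hη φ hφdef
    hφLa κ hκ hκC hgc hκscale v hvn hv e hen he hepos S hS Ξ hΞ fstar hfstar
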